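/- Under the homotopy CGM for affinely constrained problems with exact linear minimization oracle, the following one-step recursion holds for every k ≥ 1: F_{β_k}(x_{k+1}) − f⋆ ≤ (1 − η_k)(F_{β_{k−1}}(x_k) − f⋆) + (η_k²/2) D² (L_f + ‖A‖²/β_k), where β_0 = β₀ (that is, β_j = β₀/√(j+1) for j ≥ 0). -/

import Mathlib

/-!
The descent lemma for `f` and the expansion of `‖A x' - proj_K (A x_k)‖²` give a quadratic upper
model of `F_{β_k}` on the segment from `x_k` to `s_k`, with linear term
`(η_k / β_k) ⟪v_k, s_k - x_k⟫`. By the oracle this is at most its value at a feasible minimizer `x⋆`,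
and convexity of `f` together with the variational inequality of the projection bound
`⟪v_k, x⋆ - x_k⟫` by `β_k (f⋆ - f x_k) - dist(A x_k, K)²`. The penalty left over,
`(1 - 2η_k) dist(A x_k, K)² / (2β_k)`, is at most `(1 - η_k) dist(A x_k, K)² / (2β_{k-1})`
for the homotopy schedule.
-/

open RealInnerProductSpace

section Gradient

variable {E : Type*} [NormedAddCommGroup E] [InnerProductSpace ℝ E] [CompleteSpace E]
  {f : E → ℝ} {f' : E → E}

lemma hasDerivAt_comp_lineMap (hf : ∀ x, HasGradientAt f (f' x) x) (x y : E) (t : ℝ) :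
    HasDerivAt (f ∘ AffineMap.lineMap x y) ⟪f' (AffineMap.lineMap x y t), y - x⟫ t := by
  simpa using (hf _).hasFDerivAt.comp_hasDerivAt t AffineMap.hasDerivAt_lineMap

lemma ConvexOn.add_inner_gradient_le (hcvx : ConvexOn ℝ Set.univ f)
    (hf : ∀ x, HasGradientAt f (f' x) x) (x y : E) :
    f x + ⟪f' x, y - x⟫ ≤ f y := by
  have hφ : ConvexOn ℝ Set.univ (f ∘ AffineMap.lineMap x y) := hcvx.comp_affineMap _
  have hslope := hφ.le_slope_of_hasDerivAt (Set.mem_univ 0) (Set.mem_univ 1) zero_lt_one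
    (hasDerivAt_comp_lineMap hf x y 0)
  simp only [AffineMap.lineMap_apply_zero, AffineMap.lineMap_apply_one, slope_def_field,
    Function.comp_apply, sub_zero, div_one] at hslope
  linarith

lemma le_add_inner_gradient_add_sq (hf : ∀ x, HasGradientAt f (f' x) x) {L : ℝ}
    (hlip : ∀ x y, ‖f' x - f' y‖ ≤ L * ‖x - y‖) (x y : E) :
    f y ≤ f x + ⟪f' x, y - x⟫ + L / 2 * ‖y - x‖ ^ 2 := by
  set g : ℝ → ℝ := fun t ↦
    f (AffineMap.lineMap x y t) - t * ⟪f' x, y - x⟫ - L / 2 * t ^ 2 * ‖y - x‖ ^ 2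
  have hg : ∀ t, HasDerivAt g (⟪f' (AffineMap.lineMap x y t), y - x⟫ - ⟪f' x, y - x⟫
      - L * t * ‖y - x‖ ^ 2) t := by
    intro t
    refine HasDerivAt.congr_deriv (((hasDerivAt_comp_lineMap hf x y t).sub
      ((hasDerivAt_id' t).mul_const _)).sub
      (((hasDerivAt_pow 2 t).const_mul (L / 2)).mul_const (‖y - x‖ ^ 2))) ?_
    ring
  have hanti : AntitoneOn g (Set.Icc 0 1) := by
    refine antitoneOn_of_hasDerivWithinAt_nonpos (convex_Icc 0 1)
      (fun t _ ↦ (hg t).continuousAt.continuousWithinAt) (fun t _ ↦ (hg t).hasDerivWithinAt) ?_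
    rw [interior_Icc]
    intro t ht
    have hdist : ‖f' (AffineMap.lineMap x y t) - f' x‖ ≤ L * (t * ‖y - x‖) := by
      simpa [← dist_eq_norm, dist_lineMap_left, abs_of_pos ht.1, dist_comm x y] using
        hlip (AffineMap.lineMap x y t) x
    have hcs := real_inner_le_norm (f' (AffineMap.lineMap x y t) - f' x) (y - x)
    rw [inner_sub_left] at hcs
    nlinarith [mul_le_mul_of_nonneg_right hdist (norm_nonneg (y - x))]
  have hg01 := hanti (by simp) (by simp) zero_le_one
  simp only [g, AffineMap.lineMap_apply_zero, AffineMap.lineMap_apply_one, zero_mul, one_mul,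
    zero_pow two_ne_zero, one_pow, mul_zero, mul_one, sub_zero] at hg01
  linarith

end Gradient

lemma Metric.infDist_eq_dist_of_forall_dist_le {α : Type*} [PseudoMetricSpace α] {K : Set α}
    {z p : α} (hp : p ∈ K) (hmin : ∀ y ∈ K, dist z p ≤ dist z y) :
    Metric.infDist z K = dist z p :=
  le_antisymm (Metric.infDist_le_dist_of_mem hp) ((Metric.le_infDist ⟨p, hp⟩).2 hmin)

section Projection

variable {G : Type*} [NormedAddCommGroup G] [InnerProductSpace ℝ G] {K : Set G} {z p : G}

lemma inner_sub_sub_nonpos_of_forall_dist_le (hK : Convex ℝ K) (hp : p ∈ K)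
    (hmin : ∀ y ∈ K, dist z p ≤ dist z y) {u : G} (hu : u ∈ K) : ⟪z - p, u - p⟫ ≤ 0 := by
  refine (norm_eq_iInf_iff_real_inner_le_zero hK hp).1 ?_ u hu
  simpa [Metric.infDist_eq_iInf, dist_eq_norm] using
    (Metric.infDist_eq_dist_of_forall_dist_le hp hmin).symm

end Projection

/-- With `η_k = 2 / (k + 1)` and `β_j = β₀ / √(j + 1)`, this reads
`(1 - 2 η_k) β_{k-1} ≤ (1 - η_k) β_k`. -/
lemma homotopy_smoothing_le {k : ℝ} (hk : 1 ≤ k) {β₀ : ℝ} (hβ₀ : 0 ≤ β₀) :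
    (1 - 2 * (2 / (k + 1))) * (β₀ / √k) ≤ (1 - 2 / (k + 1)) * (β₀ / √(k + 1)) := by
  have hsqrt : (k - 3) * √(k + 1) ≤ (k - 1) * √k := by
    rcases le_or_gt k 3 with hk3 | hk3
    · nlinarith [Real.sqrt_nonneg (k + 1), Real.sqrt_nonneg k]
    · refine (pow_le_pow_iff_left₀ (by positivity) (by positivity) two_ne_zero).1 ?_
      rw [mul_pow, mul_pow, Real.sq_sqrt (by linarith), Real.sq_sqrt (by linarith)]
      nlinarith
  have hk0 : 0 < √k := Real.sqrt_pos.2 (by linarith)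
  have hk1 : 0 < √(k + 1) := Real.sqrt_pos.2 (by linarith)
  have e1 : 1 - 2 * (2 / (k + 1)) = (k - 3) / (k + 1) := by field_simp; ring
  have e2 : 1 - 2 / (k + 1) = (k - 1) / (k + 1) := by field_simp; ring
  rw [e1, e2, div_mul_div_comm, div_mul_div_comm, div_le_div_iff₀ (by positivity) (by positivity)]
  nlinarith [mul_le_mul_of_nonneg_right hsqrt (by positivity : 0 ≤ β₀ * (k + 1))]

section HomotopyCGM

variable {E G : Type*} [NormedAddCommGroup E] [InnerProductSpace ℝ E] [CompleteSpace E]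
  [NormedAddCommGroup G] [InnerProductSpace ℝ G] [CompleteSpace G]
  {f : E → ℝ} {f' : E → E} {L : ℝ} {A : E →L[ℝ] G} {K : Set G} {p : G} {β : ℝ}

noncomputable def smoothedObjective (f : E → ℝ) (A : E →L[ℝ] G) (K : Set G) (β : ℝ) (x : E) : ℝ :=
  f x + Metric.infDist (A x) K ^ 2 / (2 * β)

lemma smoothedObjective_add_smul_le (hf : ∀ x, HasGradientAt f (f' x) x)
    (hlip : ∀ x y, ‖f' x - f' y‖ ≤ L * ‖x - y‖) (hp : p ∈ K) (hβ : 0 < β) (x w : E) (η : ℝ) :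
    smoothedObjective f A K β (x + η • w) ≤ f x + ‖A x - p‖ ^ 2 / (2 * β)
      + η / β * ⟪β • f' x + ContinuousLinearMap.adjoint A (A x - p), w⟫
      + η ^ 2 / 2 * ‖w‖ ^ 2 * (L + ‖A‖ ^ 2 / β) := by
  have hdescent : f (x + η • w) ≤ f x + η * ⟪f' x, w⟫ + L / 2 * (η ^ 2 * ‖w‖ ^ 2) := by
    simpa [real_inner_smul_right, norm_smul, mul_pow] using
      le_add_inner_gradient_add_sq hf hlip x (x + η • w)
  have hdist : Metric.infDist (A (x + η • w)) K ^ 2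
      ≤ ‖A x - p‖ ^ 2 + 2 * η * ⟪A x - p, A w⟫ + η ^ 2 * (‖A‖ ^ 2 * ‖w‖ ^ 2) := by
    have hle : Metric.infDist (A (x + η • w)) K ≤ ‖(A x - p) + η • A w‖ := by
      have hsum : (A x - p) + η • A w = A (x + η • w) - p := by rw [map_add, map_smul]; abel
      rw [hsum, ← dist_eq_norm]
      exact Metric.infDist_le_dist_of_mem hp
    have hAw : ‖A w‖ ^ 2 ≤ ‖A‖ ^ 2 * ‖w‖ ^ 2 := by
      rw [← mul_pow]; gcongr; exact A.le_opNorm w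
    calc Metric.infDist (A (x + η • w)) K ^ 2 ≤ ‖(A x - p) + η • A w‖ ^ 2 := by
          gcongr; exact Metric.infDist_nonneg
      _ = ‖A x - p‖ ^ 2 + 2 * η * ⟪A x - p, A w⟫ + η ^ 2 * ‖A w‖ ^ 2 := by
          rw [norm_add_sq_real, real_inner_smul_right, norm_smul, mul_pow, Real.norm_eq_abs,
            sq_abs]
          ring
      _ ≤ _ := by gcongr
  have hinner : ⟪β • f' x + ContinuousLinearMap.adjoint A (A x - p), w⟫
      = β * ⟪f' x, w⟫ + ⟪A x - p, A w⟫ := by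
    rw [inner_add_left, real_inner_smul_left, ContinuousLinearMap.adjoint_inner_left]
  calc smoothedObjective f A K β (x + η • w)
      ≤ f x + η * ⟪f' x, w⟫ + L / 2 * (η ^ 2 * ‖w‖ ^ 2)
        + (‖A x - p‖ ^ 2 + 2 * η * ⟪A x - p, A w⟫ + η ^ 2 * (‖A‖ ^ 2 * ‖w‖ ^ 2)) / (2 * β) := by
        unfold smoothedObjective; gcongr
    _ = _ := by rw [hinner]; field_simp; ring

lemma inner_smul_gradient_add_adjoint_sub_le (hcvx : ConvexOn ℝ Set.univ f)
    (hf : ∀ x, HasGradientAt f (f' x) x) (hK : Convex ℝ K) (hp : p ∈ K) {x : E}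
    (hmin : ∀ y ∈ K, dist (A x) p ≤ dist (A x) y) {xs : E} (hxs : A xs ∈ K) (hβ : 0 ≤ β) :
    ⟪β • f' x + ContinuousLinearMap.adjoint A (A x - p), xs - x⟫
      ≤ β * (f xs - f x) - ‖A x - p‖ ^ 2 := by
  have hgrad : ⟪f' x, xs - x⟫ ≤ f xs - f x := by
    linarith [ConvexOn.add_inner_gradient_le hcvx hf x xs]
  have hproj := inner_sub_sub_nonpos_of_forall_dist_le hK hp hmin hxs
  have hA : A (xs - x) = (A xs - p) - (A x - p) := by rw [map_sub]; abel
  rw [inner_add_left, real_inner_smul_left, ContinuousLinearMap.adjoint_inner_left, hA,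
    inner_sub_right (A x - p), real_inner_self_eq_norm_sq]
  linarith [mul_le_mul_of_nonneg_left hgrad hβ]

lemma smoothedObjective_step_le (hcvx : ConvexOn ℝ Set.univ f)
    (hf : ∀ x, HasGradientAt f (f' x) x) (hlip : ∀ x y, ‖f' x - f' y‖ ≤ L * ‖x - y‖)
    (hL : 0 ≤ L) (hK : Convex ℝ K) (hp : p ∈ K) {x : E}
    (hmin : ∀ y ∈ K, dist (A x) p ≤ dist (A x) y) {xs s : E} (hxs : A xs ∈ K)
    (hlmo : ⟪β • f' x + ContinuousLinearMap.adjoint A (A x - p), s⟫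
      ≤ ⟪β • f' x + ContinuousLinearMap.adjoint A (A x - p), xs⟫)
    {D : ℝ} (hD : ‖s - x‖ ≤ D) {η β' : ℝ} (hη : 0 ≤ η) (hβ : 0 < β) (hβ' : 0 < β')
    (hββ' : (1 - 2 * η) * β' ≤ (1 - η) * β) :
    smoothedObjective f A K β (x + η • (s - x)) - f xs
      ≤ (1 - η) * (smoothedObjective f A K β' x - f xs)
        + η ^ 2 / 2 * D ^ 2 * (L + ‖A‖ ^ 2 / β) := by
  set r := ‖A x - p‖
  have hmodel := smoothedObjective_add_smul_le (A := A) hf hlip hp hβ x (s - x) η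
  have hgap : η / β * ⟪β • f' x + ContinuousLinearMap.adjoint A (A x - p), s - x⟫
      ≤ η * (f xs - f x) - 2 * η * (r ^ 2 / (2 * β)) := by
    calc _ ≤ η / β * (β * (f xs - f x) - r ^ 2) := by
          gcongr
          have hxs_gap := inner_smul_gradient_add_adjoint_sub_le hcvx hf hK hp hmin hxs hβ.le
          rw [inner_sub_right] at hxs_gap ⊢
          linarith
      _ = _ := by field_simp
  have hdiam : η ^ 2 / 2 * ‖s - x‖ ^ 2 * (L + ‖A‖ ^ 2 / β)
      ≤ η ^ 2 / 2 * D ^ 2 * (L + ‖A‖ ^ 2 / β) := by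
    gcongr
  have hsmoothing : (1 - 2 * η) * (r ^ 2 / (2 * β)) ≤ (1 - η) * (r ^ 2 / (2 * β')) := by
    rw [← mul_div_assoc, ← mul_div_assoc, div_le_div_iff₀ (by positivity) (by positivity)]
    nlinarith [mul_le_mul_of_nonneg_left hββ' (sq_nonneg r)]
  have hdist : Metric.infDist (A x) K = r := by
    rw [Metric.infDist_eq_dist_of_forall_dist_le hp hmin, dist_eq_norm]
  unfold smoothedObjective at hmodel ⊢
  rw [hdist]
  linarith

end HomotopyCGM

theorem stmt19_general
    (n d : ℕ)
    (X : Set (EuclideanSpace ℝ (Fin n)))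
    (hX_cpt : IsCompact X) (hX_cvx : Convex ℝ X)
    (f : EuclideanSpace ℝ (Fin n) → ℝ)
    (f' : EuclideanSpace ℝ (Fin n) → EuclideanSpace ℝ (Fin n))
    (hf_cvx : ConvexOn ℝ Set.univ f)
    (hf_grad : ∀ x, HasGradientAt f (f' x) x)
    (L_f : ℝ) (hLf : 0 ≤ L_f)
    (hf'_lip : ∀ x y, ‖f' x - f' y‖ ≤ L_f * ‖x - y‖)
    (A : EuclideanSpace ℝ (Fin n) →L[ℝ] EuclideanSpace ℝ (Fin d))
    (K : Set (EuclideanSpace ℝ (Fin d)))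
    (hK_cvx : Convex ℝ K)
    (projK : EuclideanSpace ℝ (Fin d) → EuclideanSpace ℝ (Fin d))
    (hprojK : ∀ z, projK z ∈ K ∧ ∀ y ∈ K, dist z (projK z) ≤ dist z y)
    (fstar : ℝ)
    (hfstar : IsLeast (f '' {x | x ∈ X ∧ A x ∈ K}) fstar)
    (β₀ : ℝ) (hβ₀ : 0 < β₀)
    (x s v : ℕ → EuclideanSpace ℝ (Fin n))
    (hx1 : x 1 ∈ X)
    (hv : ∀ k, 1 ≤ k → v k = (β₀ / Real.sqrt ((k:ℝ) + 1)) • f' (x k)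
        + (ContinuousLinearMap.adjoint A) (A (x k) - projK (A (x k))))
    (hs_mem : ∀ k, 1 ≤ k → s k ∈ X)
    (hlmo : ∀ k, 1 ≤ k → ∀ z ∈ X, ⟪v k, s k⟫ ≤ ⟪v k, z⟫)
    (hupd : ∀ k, 1 ≤ k → x (k + 1) = x k + (2 / ((k:ℝ) + 1)) • (s k - x k)) :
    ∀ k, 1 ≤ k →
      f (x (k + 1)) + (Metric.infDist (A (x (k + 1))) K) ^ 2 / (2 * (β₀ / Real.sqrt ((k:ℝ) + 1))) - fstar
        ≤ (1 - 2 / ((k:ℝ) + 1))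
            * (f (x k) + (Metric.infDist (A (x k)) K) ^ 2 / (2 * (β₀ / Real.sqrt (k:ℝ))) - fstar)
          + ((2 / ((k:ℝ) + 1)) ^ 2 / 2) * (Metric.diam X) ^ 2
              * (L_f + ‖A‖ ^ 2 / (β₀ / Real.sqrt ((k:ℝ) + 1))) := by
  have hstep_le_one : ∀ k : ℕ, 1 ≤ k → 2 / ((k : ℝ) + 1) ≤ 1 := fun k hk ↦ by
    rw [div_le_one (by positivity)]
    exact_mod_cast Nat.succ_le_succ hk
  have hx_mem : ∀ k, 1 ≤ k → x k ∈ X := by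
    refine Nat.le_induction hx1 fun k hk hxk ↦ ?_
    rw [hupd k hk]
    exact hX_cvx.add_smul_sub_mem hxk (hs_mem k hk) ⟨by positivity, hstep_le_one k hk⟩
  obtain ⟨xs, ⟨hxsX, hxsK⟩, rfl⟩ := hfstar.1
  intro k hk
  have hk1 : (1 : ℝ) ≤ k := by exact_mod_cast hk
  rw [hupd k hk]
  refine smoothedObjective_step_le hf_cvx hf_grad hf'_lip hLf hK_cvx (hprojK _).1 (hprojK _).2
    hxsK (by rw [← hv k hk]; exact hlmo k hk xs hxsX) ?_ (by positivity)
    (by positivity) (div_pos hβ₀ (Real.sqrt_pos.2 (by linarith)))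
    (homotopy_smoothing_le hk1 hβ₀.le)
  rw [← dist_eq_norm]
  exact Metric.dist_le_diam_of_mem hX_cpt.isBounded (hs_mem k hk) (hx_mem k hk)

theorem stmt19
    (n d : ℕ)
    (X : Set (EuclideanSpace ℝ (Fin n)))
    (hX_ne : X.Nonempty) (hX_cpt : IsCompact X) (hX_cvx : Convex ℝ X)
    (f : EuclideanSpace ℝ (Fin n) → ℝ)
    (f' : EuclideanSpace ℝ (Fin n) → EuclideanSpace ℝ (Fin n))
    (hf_cvx : ConvexOn ℝ Set.univ f)
    (hf_grad : ∀ x, HasGradientAt f (f' x) x)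
    (L_f : ℝ) (hLf : 0 ≤ L_f)
    (hf'_lip : ∀ x y, ‖f' x - f' y‖ ≤ L_f * ‖x - y‖)
    (A : EuclideanSpace ℝ (Fin n) →L[ℝ] EuclideanSpace ℝ (Fin d))
    (K : Set (EuclideanSpace ℝ (Fin d)))
    (hK_ne : K.Nonempty) (hK_cl : IsClosed K) (hK_cvx : Convex ℝ K)
    (projK : EuclideanSpace ℝ (Fin d) → EuclideanSpace ℝ (Fin d))
    (hprojK : ∀ z, projK z ∈ K ∧ ∀ y ∈ K, dist z (projK z) ≤ dist z y)
    (fstar : ℝ)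
    (hfstar : IsLeast (f '' {x | x ∈ X ∧ A x ∈ K}) fstar)
    (β₀ : ℝ) (hβ₀ : 0 < β₀)
    (x s v : ℕ → EuclideanSpace ℝ (Fin n))
    (hx1 : x 1 ∈ X)
    (hv : ∀ k, 1 ≤ k → v k = (β₀ / Real.sqrt ((k:ℝ) + 1)) • f' (x k)
        + (ContinuousLinearMap.adjoint A) (A (x k) - projK (A (x k))))
    (hs_mem : ∀ k, 1 ≤ k → s k ∈ X)
    (hlmo : ∀ k, 1 ≤ k → ∀ z ∈ X, ⟪v k, s k⟫ ≤ ⟪v k, z⟫)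
    (hupd : ∀ k, 1 ≤ k → x (k + 1) = x k + (2 / ((k:ℝ) + 1)) • (s k - x k)) :
    ∀ k, 1 ≤ k →
      f (x (k + 1)) + (Metric.infDist (A (x (k + 1))) K) ^ 2 / (2 * (β₀ / Real.sqrt ((k:ℝ) + 1))) - fstar
        ≤ (1 - 2 / ((k:ℝ) + 1))
            * (f (x k) + (Metric.infDist (A (x k)) K) ^ 2 / (2 * (β₀ / Real.sqrt (k:ℝ))) - fstar)
          + ((2 / ((k:ℝ) + 1)) ^ 2 / 2) * (Metric.diam X) ^ 2
              * (L_f + ‖A‖ ^ 2 / (β₀ / Real.sqrt ((k:ℝ) + 1))) :=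
  stmt19_general n d X hX_cpt hX_cvx f f' hf_cvx hf_grad L_f hLf hf'_lip A K hK_cvx projK hprojK
    fstar hfstar β₀ hβ₀ x s v hx1 hv hs_mem hlmo hupd
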